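/- arXiv:1811.07856 — 5 statements merged into one kernel-verified Lean document; each statement's English description precedes it below -/
import Mathlib

section
/- A subset F of E ∪ A in a mixed graph G = (V, E ∪ A) is a mixed edge cover (i.e., every vertex v ∈ V is reachable by a directed path, possibly of length 0, in F ∩ A from an endpoint of some edge in F ∩ E) if and only if F ∩ A contains a branching B whose root set R(B) is contained in the set of vertices covered by F ∩ E. -/
variable {V : Type*} [Fintype V] [DecidableEq V]

/-- Number of elements of `FE` covering `v` (an edge covers both its endpoints). -/
def edgeCoverCount (FE : Finset (Sym2 V)) (v : V) : ℕ :=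
  (FE.filter (fun e => v ∈ e)).card

/-- Number of arcs of `FA` with head `v`. -/
def arcCoverCount (FA : Finset (V × V)) (v : V) : ℕ :=
  (FA.filter (fun a => a.2 = v)).card

/-- The multiset of undirected edges underlying the edge set `FE` and arc set `FA`. -/
def underlyingEdges (FE : Finset (Sym2 V)) (FA : Finset (V × V)) : Multiset (Sym2 V) :=
  FE.val + FA.val.map (fun a => s(a.1, a.2))

/-- A multiset of undirected edges is acyclic (a forest) iff every nonempty sub-multiset
touches strictly more vertices than its number of edges. -/
def AcyclicEdgeMultiset (M : Multiset (Sym2 V)) : Prop :=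
  ∀ S : Multiset (Sym2 V), S ≤ M → S ≠ 0 →
    Multiset.card S < (Finset.univ.filter (fun v : V => ∃ e ∈ S.toFinset, v ∈ e)).card

/-- A matching forest: acyclic underlying undirected graph and every vertex covered at most
once (endpoints of edges and heads of arcs count as covered). -/
def IsMatchingForest (FE : Finset (Sym2 V)) (FA : Finset (V × V)) : Prop :=
  AcyclicEdgeMultiset (underlyingEdges FE FA) ∧
    ∀ v : V, edgeCoverCount FE v + arcCoverCount FA v ≤ 1

/-- Reachability by a directed path (possibly of length 0) using arcs of `B`. -/
def arcReach (B : Finset (V × V)) : V → V → Prop :=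
  Relation.ReflTransGen (fun u v => (u, v) ∈ B)

/-- A branching: each vertex has in-degree at most one and there is no directed cycle. -/
def IsBranching (B : Finset (V × V)) : Prop :=
  (∀ v : V, arcCoverCount B v ≤ 1) ∧ ∀ a ∈ B, ¬ arcReach B a.2 a.1

/-- The root set of a branching: vertices with in-degree zero. -/
def rootSet (B : Finset (V × V)) : Finset V :=
  Finset.univ.filter (fun v => arcCoverCount B v = 0)

/-- A matching: every vertex is covered by at most one edge. -/
def IsMatching (FE : Finset (Sym2 V)) : Prop := ∀ v : V, edgeCoverCount FE v ≤ 1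

/-- The set of vertices covered by some edge of `FE`. -/
def edgeCovered (FE : Finset (Sym2 V)) : Finset V :=
  Finset.univ.filter (fun v => 0 < edgeCoverCount FE v)

/-- A mixed edge cover: every vertex is reachable by a directed path (possibly trivial)
in the arc part from an endpoint of some edge of the edge part. -/
def IsMixedEdgeCover (FE : Finset (Sym2 V)) (FA : Finset (V × V)) : Prop :=
  ∀ v : V, ∃ u : V, (∃ e ∈ FE, u ∈ e) ∧ arcReach FA u v

/-- A mixed covering forest: acyclic underlying undirected graph and every vertex covered
at least once. -/
def IsMixedCoveringForest (FE : Finset (Sym2 V)) (FA : Finset (V × V)) : Prop :=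
  AcyclicEdgeMultiset (underlyingEdges FE FA) ∧
    ∀ v : V, 1 ≤ edgeCoverCount FE v + arcCoverCount FA v

/-- The mix-size ⟨F⟩ = |F ∩ E| + |F ∩ A| / 2. -/
def mixSize (FE : Finset (Sym2 V)) (FA : Finset (V × V)) : ℚ :=
  (FE.card : ℚ) + (FA.card : ℚ) / 2

/-!
Every vertex of a finite acyclic digraph is reached from a vertex of in-degree zero: take a
minimal element, for the well-founded relation "reaches by a nonempty path", among the vertices
reaching it. Conversely, if every vertex is reached from the edge-covered vertices, give each
vertex its breadth-first depth and let every vertex that is not edge-covered keep one arc coming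
from the previous layer; depth strictly increases along the kept arcs, so they form a branching,
and its roots are edge-covered.
-/

open Finset

section

variable {FA B : Finset (V × V)}

theorem mem_rootSet_iff {v : V} : v ∈ rootSet B ↔ ∀ u, (u, v) ∉ B := by
  simp only [rootSet, arcCoverCount, mem_filter_univ, card_eq_zero, filter_eq_empty_iff]
  exact ⟨fun h u hu => h hu rfl, fun h a ha hav => h a.1 (hav ▸ ha)⟩

theorem mem_edgeCovered_iff {FE : Finset (Sym2 V)} {v : V} :
    v ∈ edgeCovered FE ↔ ∃ e ∈ FE, v ∈ e := by
  simp [edgeCovered, edgeCoverCount, Finset.card_pos, Finset.Nonempty]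

theorem isMixedEdgeCover_iff {FE : Finset (Sym2 V)} :
    IsMixedEdgeCover FE FA ↔ ∀ v, ∃ u ∈ edgeCovered FE, arcReach FA u v := by
  simp only [IsMixedEdgeCover, mem_edgeCovered_iff]

theorem exists_mem_rootSet_arcReach (hB : ∀ a ∈ B, ¬ arcReach B a.2 a.1) (v : V) :
    ∃ r ∈ rootSet B, arcReach B r v := by
  let below := Relation.TransGen fun u w => (u, w) ∈ B
  have : Std.Irrefl below := ⟨fun x hx => by
    obtain ⟨y, hxy, hyx⟩ := Relation.TransGen.tail'_iff.1 hx
    exact hB (y, x) hyx hxy⟩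
  obtain ⟨r, hrv, hmin⟩ := (Finite.wellFounded_of_trans_of_irrefl below).has_min
    {x | arcReach B x v} ⟨v, .refl⟩
  exact ⟨r, mem_rootSet_iff.2 fun u hur => hmin u (.head hur hrv) (.single hur), hrv⟩

theorem isBranching_image_of_lt {β : Type*} [Preorder β] (S : Finset V) (p : V → V) (d : V → β)
    (hd : ∀ v ∉ S, d (p v) < d v) : IsBranching (Sᶜ.image fun v => (p v, v)) := by
  set B := Sᶜ.image fun v => (p v, v)
  have mem_B : ∀ {u w}, (u, w) ∈ B → w ∉ S ∧ u = p w := by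
    intro u w huw
    obtain ⟨v, hv, hvuw⟩ := mem_image.1 huw
    obtain ⟨rfl, rfl⟩ := Prod.ext_iff.1 hvuw
    exact ⟨mem_compl.1 hv, rfl⟩
  have reach_le : ∀ {x y}, arcReach B x y → d x ≤ d y := by
    intro x y hxy
    induction hxy with
    | refl => exact le_rfl
    | tail _ hyz ih =>
      obtain ⟨hz, rfl⟩ := mem_B hyz
      exact ih.trans (hd _ hz).le
  refine ⟨fun v => card_le_one.2 fun ⟨a, w⟩ ha ⟨b, w'⟩ hb => ?_, fun ⟨u, w⟩ huw hcyc => ?_⟩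
  · obtain ⟨haB, rfl : w = v⟩ := mem_filter.1 ha
    obtain ⟨hbB, rfl : w' = w⟩ := mem_filter.1 hb
    rw [(mem_B haB).2, (mem_B hbB).2]
  · obtain ⟨hw, rfl⟩ := mem_B huw
    exact (hd w hw).not_ge (reach_le hcyc)

end

section

variable {α : Type*} [DecidableEq α] {S : Finset α} {FA : Finset (α × α)}

def reachWithin (FA : Finset (α × α)) (S : Finset α) : ℕ → Finset α
  | 0 => S
  | n + 1 => reachWithin FA S n ∪ (FA.filter (·.1 ∈ reachWithin FA S n)).image Prod.snd

theorem exists_mem_reachWithin {u v : α} (hu : u ∈ S) (huv : arcReach FA u v) :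
    ∃ n, v ∈ reachWithin FA S n := by
  induction huv with
  | refl => exact ⟨0, hu⟩
  | tail _ hwx ih =>
    obtain ⟨n, hw⟩ := ih
    exact ⟨n + 1, mem_union_right _ (mem_image.2 ⟨_, mem_filter.2 ⟨hwx, hw⟩, rfl⟩)⟩

theorem exists_arc_of_mem_reachWithin_succ {n : ℕ} {v : α}
    (hv : v ∈ reachWithin FA S (n + 1)) (hv' : v ∉ reachWithin FA S n) :
    ∃ u ∈ reachWithin FA S n, (u, v) ∈ FA := by
  obtain hv | hv := mem_union.1 hv
  · exact absurd hv hv'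
  · obtain ⟨⟨u, w⟩, huw, rfl⟩ := mem_image.1 hv
    obtain ⟨huw, hu⟩ := mem_filter.1 huw
    exact ⟨u, hu, huw⟩

theorem exists_depth_of_forall_arcReach (h : ∀ v, ∃ u ∈ S, arcReach FA u v) :
    ∃ d : α → ℕ, ∀ v ∉ S, ∃ u, (u, v) ∈ FA ∧ d u < d v := by
  have hreach : ∀ v, ∃ n, v ∈ reachWithin FA S n := fun v =>
    let ⟨_, hu, huv⟩ := h v
    exists_mem_reachWithin hu huv
  refine ⟨fun v => Nat.find (hreach v), fun v hv => ?_⟩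
  beta_reduce
  obtain ⟨m, hm⟩ : ∃ m, Nat.find (hreach v) = m + 1 :=
    Nat.exists_eq_succ_of_ne_zero fun h0 => hv ((Nat.find_eq_zero _).1 h0)
  obtain ⟨u, hu, huv⟩ := exists_arc_of_mem_reachWithin_succ (hm ▸ Nat.find_spec (hreach v))
    (Nat.find_min (hreach v) (by omega))
  exact ⟨u, huv, (Nat.find_min' (hreach u) hu).trans_lt (by omega)⟩

end

theorem exists_branching_of_forall_arcReach {S : Finset V} {FA : Finset (V × V)}
    (h : ∀ v, ∃ u ∈ S, arcReach FA u v) :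
    ∃ B ⊆ FA, IsBranching B ∧ rootSet B ⊆ S := by
  obtain ⟨d, hd⟩ := exists_depth_of_forall_arcReach h
  choose! p hpFA hpd using hd
  refine ⟨Sᶜ.image fun v => (p v, v), ?_, isBranching_image_of_lt S p d hpd, fun v hv => ?_⟩
  · simp only [subset_iff, mem_image, mem_compl, forall_exists_index, and_imp]
    rintro _ v hv rfl
    exact hpFA v hv
  · by_contra hvS
    exact mem_rootSet_iff.1 hv (p v) (mem_image_of_mem _ (mem_compl.2 hvS))

theorem mixed_edge_cover_characterization_general
    (FE : Finset (Sym2 V)) (FA : Finset (V × V)) :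
    IsMixedEdgeCover FE FA ↔
      ∃ B ⊆ FA, IsBranching B ∧ rootSet B ⊆ edgeCovered FE := by
  rw [isMixedEdgeCover_iff]
  refine ⟨exists_branching_of_forall_arcReach, fun ⟨B, hBFA, hB, hroot⟩ v => ?_⟩
  obtain ⟨r, hr, hrv⟩ := exists_mem_rootSet_arcReach hB.2 v
  exact ⟨r, hroot hr, Relation.ReflTransGen.mono (fun _ _ h => hBFA h) _ _ hrv⟩

theorem mixed_edge_cover_characterization
    (E : Finset (Sym2 V)) (A : Finset (V × V))
    (hE : ∀ e ∈ E, ¬ e.IsDiag) (hA : ∀ a ∈ A, a.1 ≠ a.2)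
    (FE : Finset (Sym2 V)) (FA : Finset (V × V)) (hFE : FE ⊆ E) (hFA : FA ⊆ A) :
    IsMixedEdgeCover FE FA ↔
      ∃ B ⊆ FA, IsBranching B ∧ rootSet B ⊆ edgeCovered FE :=
  mixed_edge_cover_characterization_general FE FA
end

section
/- Every mixed covering forest of a mixed graph is a mixed edge cover. -/
/-!
Let `U` be the set of vertices from which `v` can be reached along arcs of the forest. An arc
entering a vertex of `U` has its tail in `U`, so if every vertex of `U` were the head of an arc,
choosing one such arc per vertex would give `|U|` edges of the underlying forest spanning only
the `|U|` vertices of `U`, a cycle. Hence some `u ∈ U` is the head of no arc; being covered, it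
is an endpoint of an edge, and `v` is reachable from it.
-/

variable {V : Type*} [Fintype V] [DecidableEq V]

theorem AcyclicEdgeMultiset.mono {M N : Multiset (Sym2 V)} (hM : AcyclicEdgeMultiset M)
    (hNM : N ≤ M) : AcyclicEdgeMultiset N :=
  fun S hSN hS => hM S (hSN.trans hNM) hS

theorem exists_mem_forall_not_arc_of_acyclic {FA : Finset (V × V)}
    (hFA : AcyclicEdgeMultiset (FA.val.map fun a => s(a.1, a.2)))
    {U : Finset V} (hU : U.Nonempty) : ∃ u ∈ U, ∀ t ∈ U, (t, u) ∉ FA := by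
  by_contra! hin
  choose tail htail hmem using fun u : U => hin u u.2
  set T : Finset (V × V) := U.attach.image fun u => (tail u, u.1)
  set S : Multiset (Sym2 V) := T.val.map fun a => s(a.1, a.2)
  have hTFA : T ⊆ FA := by
    simp only [T, Finset.image_subset_iff]
    exact fun u _ => hmem u
  have hcardS : Multiset.card S = U.card := by
    have hinj : Function.Injective fun u : U => (tail u, u.1) :=
      fun u w huw => Subtype.ext (congrArg Prod.snd huw)
    rw [Multiset.card_map, Finset.card_val, Finset.card_image_of_injective _ hinj,
      Finset.card_attach]
  have hSne : S ≠ 0 := by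
    rw [← Multiset.card_pos, hcardS]
    exact hU.card_pos
  have hspan : Finset.univ.filter (fun v : V => ∃ e ∈ S.toFinset, v ∈ e) ⊆ U := by
    intro w hw
    obtain ⟨e, he, hwe⟩ := (Finset.mem_filter.mp hw).2
    obtain ⟨a, ha, rfl⟩ := Multiset.mem_map.mp (Multiset.mem_toFinset.mp he)
    obtain ⟨u, -, rfl⟩ := Finset.mem_image.mp (Finset.mem_val.mp ha)
    rcases Sym2.mem_iff.mp hwe with rfl | rfl
    · exact htail u
    · exact u.2
  have hlt := hFA S (Multiset.map_le_map (Finset.val_le_iff.mpr hTFA)) hSne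
  have := Finset.card_le_card hspan
  omega

theorem mixed_covering_forest_is_mixed_edge_cover_general
    (FE : Finset (Sym2 V)) (FA : Finset (V × V))
    (h : IsMixedCoveringForest FE FA) :
    IsMixedEdgeCover FE FA := by
  classical
  obtain ⟨hacyclic, hcover⟩ := h
  intro v
  have harcs : AcyclicEdgeMultiset (FA.val.map fun a => s(a.1, a.2)) :=
    hacyclic.mono (Multiset.le_add_left _ _)
  set U := Finset.univ.filter fun u => arcReach FA u v
  have hvU : v ∈ U := Finset.mem_filter.mpr ⟨Finset.mem_univ v, Relation.ReflTransGen.refl⟩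
  obtain ⟨u, huU, hnoarc⟩ := exists_mem_forall_not_arc_of_acyclic harcs ⟨v, hvU⟩
  have hreach : arcReach FA u v := (Finset.mem_filter.mp huU).2
  have hnohead : arcCoverCount FA u = 0 := by
    by_contra hpos
    obtain ⟨⟨t, _⟩, ht, rfl⟩ :=
      Finset.filter_nonempty_iff.mp (Finset.card_pos.mp (Nat.pos_of_ne_zero hpos))
    exact hnoarc t (Finset.mem_filter.mpr ⟨Finset.mem_univ t, .head ht hreach⟩) ht
  have hedge : 0 < edgeCoverCount FE u := by
    have := hcover u
    omega
  exact ⟨u, Finset.filter_nonempty_iff.mp (Finset.card_pos.mp hedge), hreach⟩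

theorem mixed_covering_forest_is_mixed_edge_cover
    (E : Finset (Sym2 V)) (A : Finset (V × V))
    (hE : ∀ e ∈ E, ¬ e.IsDiag) (hA : ∀ a ∈ A, a.1 ≠ a.2)
    (FE : Finset (Sym2 V)) (FA : Finset (V × V)) (hFE : FE ⊆ E) (hFA : FA ⊆ A)
    (h : IsMixedCoveringForest FE FA) :
    IsMixedEdgeCover FE FA :=
  mixed_covering_forest_is_mixed_edge_cover_general FE FA h
end

section
/- If F is an inclusionwise minimal mixed edge cover, then for every arc a ∈ F ∩ A, the head of a is covered only by a in F; that is, the head of a is not an endpoint of any edge in F ∩ E and not the head of any other arc in F ∩ A. -/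
variable {V : Type*} [Fintype V] [DecidableEq V]

/-! If the head `z` of an arc `a` of a minimal mixed edge cover were covered a second time,
some arc `d` with head `z` could be dropped: `z` stays reachable from an edge without `d`
(trivially if `z` lies on an edge; otherwise a path to `z`, cut at its first arrival at `z`,
uses only one of two arcs entering `z`), and then every vertex reached through `d` is
reached through `z` instead. -/

section
omit [Fintype V]

lemma arcReach.erase_or_from_snd {B : Finset (V × V)} (c : V × V) {u v : V}
    (h : arcReach B u v) : arcReach (B.erase c) u v ∨ arcReach (B.erase c) c.2 v := by
  induction h with
  | refl => exact Or.inl .refl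
  | @tail w x _ hwx ih =>
    by_cases hc : (w, x) = c
    · exact Or.inr (hc ▸ .refl)
    · have hwx' : (w, x) ∈ B.erase c := Finset.mem_erase.mpr ⟨hc, hwx⟩
      exact ih.imp (·.tail hwx') (·.tail hwx')

lemma arcReach.erase_or_erase {B : Finset (V × V)} {a b : V × V} {u z : V} (hab : a ≠ b)
    (ha : a.2 = z) (hb : b.2 = z) (h : arcReach B u z) :
    arcReach (B.erase a) u z ∨ arcReach (B.erase b) u z := by
  induction h using Relation.ReflTransGen.head_induction_on with
  | refl => exact Or.inl .refl
  | @head u q huq _ ih =>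
    by_cases hq : q = z
    · subst hq
      by_cases hua : (u, q) = a
      · exact Or.inr (.single (Finset.mem_erase.mpr ⟨hua ▸ hab, huq⟩))
      · exact Or.inl (.single (Finset.mem_erase.mpr ⟨hua, huq⟩))
    · have hne : ∀ d : V × V, d.2 = z → (u, q) ≠ d := fun d hd h => hq (by rw [← hd, ← h])
      exact ih.imp (.head (Finset.mem_erase.mpr ⟨hne a ha, huq⟩))
        (.head (Finset.mem_erase.mpr ⟨hne b hb, huq⟩))

lemma IsMixedEdgeCover.erase_arc {FE : Finset (Sym2 V)} {FA : Finset (V × V)}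
    (hmec : IsMixedEdgeCover FE FA) {d : V × V}
    (hd : ∃ u, (∃ e ∈ FE, u ∈ e) ∧ arcReach (FA.erase d) u d.2) :
    IsMixedEdgeCover FE (FA.erase d) := by
  intro v
  obtain ⟨u, hu, huv⟩ := hmec v
  obtain ⟨w, hw, hwd⟩ := hd
  exact (huv.erase_or_from_snd d).elim (⟨u, hu, ·⟩) (⟨w, hw, hwd.trans ·⟩)

end

theorem minimal_mec_head_covered_only_once_general
    (FE : Finset (Sym2 V)) (FA : Finset (V × V))
    (hmec : IsMixedEdgeCover FE FA)
    (hmin : ∀ FE' FA', FE' ⊆ FE → FA' ⊆ FA → IsMixedEdgeCover FE' FA' →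
      FE' = FE ∧ FA' = FA) :
    ∀ a ∈ FA, (∀ e ∈ FE, a.2 ∉ e) ∧ (∀ b ∈ FA, b.2 = a.2 → b = a) := by
  have head_unreachable : ∀ d ∈ FA,
      ¬ ∃ u, (∃ e ∈ FE, u ∈ e) ∧ arcReach (FA.erase d) u d.2 := fun d hd hreach =>
    Finset.erase_eq_self.mp (hmin FE (FA.erase d) subset_rfl (Finset.erase_subset d FA)
      (hmec.erase_arc hreach)).2 hd
  intro a ha
  refine ⟨fun e he hae => head_unreachable a ha ⟨a.2, ⟨e, he, hae⟩, .refl⟩, fun b hb hba => ?_⟩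
  by_contra hne
  obtain ⟨u, hu, hpath⟩ := hmec a.2
  rcases hpath.erase_or_erase (Ne.symm hne) rfl hba with h | h
  · exact head_unreachable a ha ⟨u, hu, h⟩
  · exact head_unreachable b hb ⟨u, hu, hba ▸ h⟩

theorem minimal_mec_head_covered_only_once
    (E : Finset (Sym2 V)) (A : Finset (V × V))
    (hE : ∀ e ∈ E, ¬ e.IsDiag) (hA : ∀ a ∈ A, a.1 ≠ a.2)
    (FE : Finset (Sym2 V)) (FA : Finset (V × V)) (hFE : FE ⊆ E) (hFA : FA ⊆ A)
    (hmec : IsMixedEdgeCover FE FA)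
    (hmin : ∀ FE' FA', FE' ⊆ FE → FA' ⊆ FA → IsMixedEdgeCover FE' FA' →
      FE' = FE ∧ FA' = FA) :
    ∀ a ∈ FA, (∀ e ∈ FE, a.2 ∉ e) ∧ (∀ b ∈ FA, b.2 = a.2 → b = a) :=
  minimal_mec_head_covered_only_once_general FE FA hmec hmin
end

section
/- Gallai's theorem for mixed graphs: Let G = (V, E ∪ A) be a mixed graph that admits at least one mixed edge cover. Define the mix-size of F ⊆ E ∪ A as ⟨F⟩ = |F ∩ E| + (1/2)|F ∩ A|. Let ν(G) be the maximum mix-size of a matching forest of G and ρ(G) the minimum mix-size of a mixed edge cover of G. Then ν(G) + ρ(G) = |V|. -/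
variable {V : Type*} [Fintype V] [DecidableEq V]

/-!
`ν + ρ ≥ |V|`: given a mixed edge cover `(CE, CA)`, a maximum matching `ME ⊆ CE` covers all but at
most `|CE| - |ME|` of the vertices covered by `CE`, and a breadth-first branching `B ⊆ CA` rooted
at those vertices enters every other vertex once; `(ME, B)` is a matching forest, and counting
vertices gives `|V| ≤ ⟨ME ∪ B⟩ + ⟨CE ∪ CA⟩`.

`ν + ρ ≤ |V|`: a matching forest `F` misses `|V| - 2|F ∩ E| - |F ∩ A|` vertices, so adding one
edge at each missed vertex gives a mixed edge cover of mix-size `|V| - ⟨F⟩`, provided every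
missed vertex lies on an edge. For a suitable maximum `F` this holds: a missed vertex is reachable
along arcs from an edge, and exchanging arcs along that path moves it back to the edge.

Each forest constructed is certified acyclic by a potential that increases along every arc.
-/

open Finset

namespace Multiset

variable {α β : Type*}

theorem exists_eq_add_of_le_add [DecidableEq α] {S s t : Multiset α} (h : S ≤ s + t) :
    ∃ s' ≤ s, ∃ t' ≤ t, S = s' + t' :=
  ⟨S ∩ s, inter_le_right, S - s, Multiset.sub_le_iff_le_add'.2 h, by rw [add_comm, sub_add_inter]⟩

theorem exists_eq_map_of_le_map {f : α → β} {S : Multiset β} {s : Multiset α}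
    (h : S ≤ s.map f) : ∃ t ≤ s, S = t.map f := by
  induction S using Quotient.inductionOn with | h l₁ =>
  induction s using Quotient.inductionOn with | h l₂ =>
  obtain ⟨l, hperm, hsub⟩ := coe_le.1 h
  obtain ⟨l', hl', rfl⟩ := List.sublist_map_iff.1 hsub
  exact ⟨l', coe_le.2 hl'.subperm, (Quot.sound hperm).symm⟩

end Multiset

theorem sum_eq_card_filter_pos_of_le_one {ι : Type*} [Fintype ι] {g : ι → ℕ}
    (h : ∀ i, g i ≤ 1) : ∑ i, g i = #(univ.filter fun i => 0 < g i) := by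
  rw [card_filter]
  exact sum_congr rfl fun i _ => by have := h i; split_ifs <;> omega

omit [Fintype V] in
theorem edgeCoverCount_pos_iff {FE : Finset (Sym2 V)} {v : V} :
    0 < edgeCoverCount FE v ↔ ∃ e ∈ FE, v ∈ e := by
  simp [edgeCoverCount, card_pos, filter_nonempty_iff]

omit [Fintype V] in
theorem arcCoverCount_pos_iff {FA : Finset (V × V)} {v : V} :
    0 < arcCoverCount FA v ↔ ∃ a ∈ FA, a.2 = v := by
  simp [arcCoverCount, card_pos, filter_nonempty_iff]

omit [Fintype V] in
theorem edgeCoverCount_mono {FE FE' : Finset (Sym2 V)} (h : FE ⊆ FE') (v : V) :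
    edgeCoverCount FE v ≤ edgeCoverCount FE' v :=
  card_le_card (filter_subset_filter _ h)

omit [Fintype V] in
theorem arcCoverCount_mono {FA FA' : Finset (V × V)} (h : FA ⊆ FA') (v : V) :
    arcCoverCount FA v ≤ arcCoverCount FA' v :=
  card_le_card (filter_subset_filter _ h)

theorem card_filter_mem_of_not_isDiag {e : Sym2 V} (he : ¬ e.IsDiag) :
    #(univ.filter (· ∈ e)) = 2 := by
  induction e using Sym2.inductionOn with | hf a b =>
  have hab : a ≠ b := by simpa using he
  rw [show univ.filter (· ∈ s(a, b)) = {a, b} by ext; simp, card_pair hab]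

theorem two_mul_card_eq_sum_edgeCoverCount {FE : Finset (Sym2 V)}
    (hFE : ∀ e ∈ FE, ¬ e.IsDiag) : 2 * #FE = ∑ v, edgeCoverCount FE v := by
  simp only [edgeCoverCount, card_filter]
  rw [sum_comm, sum_congr rfl fun e he => by
    rw [← card_filter, card_filter_mem_of_not_isDiag (hFE e he)], sum_const, smul_eq_mul, mul_comm]

theorem card_eq_sum_arcCoverCount (FA : Finset (V × V)) : #FA = ∑ v, arcCoverCount FA v :=
  card_eq_sum_card_fiberwise fun a _ => mem_univ a.2

def covered (FE : Finset (Sym2 V)) (FA : Finset (V × V)) : Finset V :=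
  univ.filter fun v => 0 < edgeCoverCount FE v + arcCoverCount FA v

theorem card_covered {FE : Finset (Sym2 V)} {FA : Finset (V × V)} (hFE : ∀ e ∈ FE, ¬ e.IsDiag)
    (h : ∀ v, edgeCoverCount FE v + arcCoverCount FA v ≤ 1) :
    #(covered FE FA) = 2 * #FE + #FA := by
  rw [covered, ← sum_eq_card_filter_pos_of_le_one h, sum_add_distrib,
    two_mul_card_eq_sum_edgeCoverCount hFE, card_eq_sum_arcCoverCount]

omit [Fintype V] in
theorem exists_eq_underlyingEdges_of_le {S : Multiset (Sym2 V)} {FE : Finset (Sym2 V)}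
    {FA : Finset (V × V)} (h : S ≤ underlyingEdges FE FA) :
    ∃ TE ⊆ FE, ∃ TA ⊆ FA, S = underlyingEdges TE TA := by
  obtain ⟨s, hs, t, ht, rfl⟩ := Multiset.exists_eq_add_of_le_add h
  obtain ⟨u, hu, rfl⟩ := Multiset.exists_eq_map_of_le_map ht
  exact ⟨⟨s, Multiset.nodup_of_le hs FE.nodup⟩, val_le_iff.1 hs,
    ⟨u, Multiset.nodup_of_le hu FA.nodup⟩, val_le_iff.1 hu, rfl⟩

omit [Fintype V] [DecidableEq V] in
@[simp]
theorem mem_underlyingEdges {FE : Finset (Sym2 V)} {FA : Finset (V × V)} {x : Sym2 V} :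
    x ∈ underlyingEdges FE FA ↔ x ∈ FE ∨ ∃ a ∈ FA, s(a.1, a.2) = x := by
  simp [underlyingEdges]

omit [Fintype V] [DecidableEq V] in
@[simp]
theorem card_underlyingEdges (FE : Finset (Sym2 V)) (FA : Finset (V × V)) :
    Multiset.card (underlyingEdges FE FA) = #FE + #FA := by
  simp [underlyingEdges]

def vertexSet (M : Multiset (Sym2 V)) : Finset V :=
  univ.filter fun v => ∃ e ∈ M.toFinset, v ∈ e

@[simp]
theorem mem_vertexSet {M : Multiset (Sym2 V)} {v : V} : v ∈ vertexSet M ↔ ∃ e ∈ M, v ∈ e := by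
  simp [vertexSet]

theorem covered_subset_vertexSet (FE : Finset (Sym2 V)) (FA : Finset (V × V)) :
    covered FE FA ⊆ vertexSet (underlyingEdges FE FA) := by
  intro v hv
  simp only [covered, mem_filter, mem_univ, true_and, Nat.add_pos_iff_pos_or_pos,
    edgeCoverCount_pos_iff, arcCoverCount_pos_iff] at hv
  rcases hv with ⟨e, he, hve⟩ | ⟨a, ha, rfl⟩
  · exact mem_vertexSet.2 ⟨e, mem_underlyingEdges.2 (Or.inl he), hve⟩
  · exact mem_vertexSet.2 ⟨_, mem_underlyingEdges.2 (Or.inr ⟨a, ha, rfl⟩), Sym2.mem_mk_right _ _⟩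

/-- Every edge of `TE` and the head of every arc of `TA` contribute their own vertices; if there
are only arcs, the tail of an arc with lowest potential is one vertex more. -/
theorem card_underlyingEdges_lt {TE : Finset (Sym2 V)} {TA : Finset (V × V)}
    (hTE : ∀ e ∈ TE, ¬ e.IsDiag) (hcov : ∀ v, edgeCoverCount TE v + arcCoverCount TA v ≤ 1)
    {f : V → ℕ} (hf : ∀ a ∈ TA, f a.1 < f a.2) (hne : TE.Nonempty ∨ TA.Nonempty) :
    Multiset.card (underlyingEdges TE TA) < #(vertexSet (underlyingEdges TE TA)) := by
  have hsub := covered_subset_vertexSet TE TA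
  have hcovered := card_covered hTE hcov
  rw [card_underlyingEdges]
  rcases TE.eq_empty_or_nonempty with rfl | hTEne
  · obtain ⟨a, ha, hmin⟩ := exists_min_image TA (fun a => f a.1) (hne.resolve_left (by simp))
    have htail : a.1 ∉ covered ∅ TA := by
      simp only [covered, mem_filter, mem_univ, true_and, edgeCoverCount, filter_empty,
        card_empty, zero_add, arcCoverCount_pos_iff, not_exists, not_and]
      intro b hb hba
      have := hf b hb
      rw [hba] at this
      exact absurd (hmin b hb) (by omega)
    have hins : insert a.1 (covered ∅ TA) ⊆ vertexSet (underlyingEdges ∅ TA) :=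
      insert_subset (mem_vertexSet.2 ⟨_, mem_underlyingEdges.2 (Or.inr ⟨a, ha, rfl⟩),
        Sym2.mem_mk_left _ _⟩) hsub
    have := card_le_card hins
    rw [card_insert_of_notMem htail] at this
    simp only [card_empty] at hcovered ⊢
    omega
  · have := card_le_card hsub
    have := hTEne.card_pos
    omega

theorem isMatchingForest_of_potential {FE : Finset (Sym2 V)} {FA : Finset (V × V)}
    (hFE : ∀ e ∈ FE, ¬ e.IsDiag) (hcov : ∀ v, edgeCoverCount FE v + arcCoverCount FA v ≤ 1)
    (f : V → ℕ) (hf : ∀ a ∈ FA, f a.1 < f a.2) : IsMatchingForest FE FA := by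
  refine ⟨fun S hS hS0 => ?_, hcov⟩
  obtain ⟨TE, hTE, TA, hTA, rfl⟩ := exists_eq_underlyingEdges_of_le hS
  refine card_underlyingEdges_lt (fun e he => hFE e (hTE he))
    (fun v => (add_le_add (edgeCoverCount_mono hTE v) (arcCoverCount_mono hTA v)).trans (hcov v))
    (fun a ha => hf a (hTA ha)) ?_
  by_contra! h
  obtain ⟨rfl, rfl⟩ := h
  simp [underlyingEdges] at hS0

/-- The arcs lying on a closed walk through `a` form a set in which every tail is also a head,
so they touch no more vertices than there are arcs. -/
theorem not_arcReach_of_isMatchingForest {FE : Finset (Sym2 V)} {FA : Finset (V × V)}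
    (hF : IsMatchingForest FE FA) {a : V × V} (ha : a ∈ FA) : ¬ arcReach FA a.2 a.1 := by
  classical
  intro hcyc
  set T := FA.filter fun p => arcReach FA a.2 p.1 ∧ arcReach FA p.2 a.1
  have haT : a ∈ T := mem_filter.2 ⟨ha, hcyc, hcyc⟩
  have hclosed : ∀ p ∈ T, ∃ q ∈ T, q.2 = p.1 := by
    intro p hp
    obtain ⟨hpFA, hfrom, hto⟩ := mem_filter.1 hp
    rcases hfrom.cases_tail with h | ⟨c, hc, hcp⟩
    · exact ⟨a, haT, h.symm⟩
    · exact ⟨(c, p.1), mem_filter.2 ⟨hcp, hc, (Relation.ReflTransGen.single hpFA).trans hto⟩, rfl⟩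
  have hle : underlyingEdges ∅ T ≤ underlyingEdges FE FA := by
    simp only [underlyingEdges, empty_val, zero_add]
    exact (Multiset.map_le_map (val_le_iff.2 (filter_subset _ FA))).trans
      (Multiset.le_add_left _ _)
  have hlt : Multiset.card (underlyingEdges ∅ T) < #(vertexSet (underlyingEdges ∅ T)) :=
    hF.1 _ hle (by simpa [underlyingEdges] using ne_empty_of_mem haT)
  have hheads : vertexSet (underlyingEdges ∅ T) ⊆ T.image Prod.snd := by
    intro v hv
    simp only [mem_vertexSet, mem_underlyingEdges, notMem_empty, false_or] at hv
    obtain ⟨_, ⟨p, hp, rfl⟩, hv⟩ := hv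
    rcases Sym2.mem_iff.1 hv with rfl | rfl
    · obtain ⟨q, hq, hqp⟩ := hclosed p hp
      exact mem_image.2 ⟨q, hq, hqp⟩
    · exact mem_image_of_mem _ hp
  have := (card_le_card hheads).trans card_image_le
  rw [card_underlyingEdges, card_empty, zero_add] at hlt
  omega

omit [DecidableEq V] in
theorem exists_potential {B : Finset (V × V)} (h : ∀ a ∈ B, ¬ arcReach B a.2 a.1) :
    ∃ f : V → ℕ, ∀ a ∈ B, f a.1 < f a.2 := by
  classical
  refine ⟨fun v => #(univ.filter (arcReach B · v)), fun a ha => card_lt_card ?_⟩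
  have hsub : univ.filter (arcReach B · a.1) ⊆ univ.filter (arcReach B · a.2) := by
    intro w hw
    simp only [mem_filter, mem_univ, true_and] at hw ⊢
    exact hw.tail ha
  exact (ssubset_iff_of_subset hsub).2
    ⟨a.2, mem_filter.2 ⟨mem_univ _, .refl⟩, fun h' => h a ha (mem_filter.1 h').2⟩

theorem exists_potential_of_isMatchingForest {FE : Finset (Sym2 V)} {FA : Finset (V × V)}
    (hF : IsMatchingForest FE FA) : ∃ f : V → ℕ, ∀ a ∈ FA, f a.1 < f a.2 :=
  exists_potential fun _ ha => not_arcReach_of_isMatchingForest hF ha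

omit [Fintype V] in
theorem exists_root_arcReach {B : Finset (V × V)} {f : V → ℕ} (hf : ∀ a ∈ B, f a.1 < f a.2)
    (v : V) : ∃ r, arcCoverCount B r = 0 ∧ arcReach B r v := by
  induction hv : f v using Nat.strong_induction_on generalizing v with | _ n ih =>
  by_cases h0 : arcCoverCount B v = 0
  · exact ⟨v, h0, .refl⟩
  · obtain ⟨a, ha, rfl⟩ := arcCoverCount_pos_iff.1 (Nat.pos_of_ne_zero h0)
    obtain ⟨r, hr, hra⟩ := ih _ (hv ▸ hf a ha) a.1 rfl
    exact ⟨r, hr, hra.tail ha⟩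

omit [Fintype V] [DecidableEq V] in
def reachIn (X : Finset V) (B : Finset (V × V)) : ℕ → V → Prop
  | 0, v => v ∈ X
  | n + 1, v => reachIn X B n v ∨ ∃ u, reachIn X B n u ∧ (u, v) ∈ B

omit [Fintype V] [DecidableEq V] in
theorem exists_reachIn_of_arcReach {X : Finset V} {B : Finset (V × V)} {x v : V} (hx : x ∈ X)
    (h : arcReach B x v) : ∃ n, reachIn X B n v := by
  induction h with
  | refl => exact ⟨0, hx⟩
  | tail _ huv ih =>
    obtain ⟨n, hn⟩ := ih
    exact ⟨n + 1, Or.inr ⟨_, hn, huv⟩⟩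

theorem exists_branching {X : Finset V} {CA : Finset (V × V)}
    (hreach : ∀ v, ∃ x ∈ X, arcReach CA x v) :
    ∃ B ⊆ CA, (∀ v, arcCoverCount B v = if v ∈ X then 0 else 1) ∧
      ∃ f : V → ℕ, ∀ a ∈ B, f a.1 < f a.2 := by
  classical
  have hfin : ∀ v, ∃ n, reachIn X CA n v := fun v =>
    let ⟨_, hx, h⟩ := hreach v
    exists_reachIn_of_arcReach hx h
  have hparent : ∀ v ∉ X, ∃ u, (u, v) ∈ CA ∧ Nat.find (hfin u) < Nat.find (hfin v) := by
    intro v hv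
    obtain ⟨n, hn⟩ : ∃ n, Nat.find (hfin v) = n + 1 :=
      Nat.exists_eq_succ_of_ne_zero fun h0 => hv <| by
        have h := Nat.find_spec (hfin v)
        rwa [h0] at h
    have hspec : reachIn X CA (n + 1) v := hn ▸ Nat.find_spec (hfin v)
    rcases hspec with h | ⟨u, hu, huv⟩
    · exact absurd h (Nat.find_min (hfin v) (by omega))
    · exact ⟨u, huv, (Nat.find_min' (hfin u) hu).trans_lt (by omega)⟩
  choose! par hparCA hpard using hparent
  refine ⟨Xᶜ.image fun v => (par v, v), ?_, fun v => ?_, fun v => Nat.find (hfin v), ?_⟩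
  · simp only [image_subset_iff, mem_compl]
    exact hparCA
  · rw [arcCoverCount, filter_image, filter_eq']
    split_ifs <;> simp_all
  · simp only [mem_image, mem_compl]
    rintro _ ⟨v, hv, rfl⟩
    exact hpard v hv

omit [Fintype V] in
theorem isMatching_insert {M : Finset (Sym2 V)} (hM : IsMatching M) {e : Sym2 V}
    (he : ∀ v ∈ e, edgeCoverCount M v = 0) : IsMatching (insert e M) := by
  intro v
  rw [edgeCoverCount, filter_insert]
  split_ifs with hv
  · exact (card_insert_le _ _).trans (by rw [← edgeCoverCount, he v hv])
  · exact hM v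

theorem card_edgeCovered_of_isMatching {M : Finset (Sym2 V)} (hM : IsMatching M)
    (hloop : ∀ e ∈ M, ¬ e.IsDiag) : #(edgeCovered M) = 2 * #M := by
  rw [edgeCovered, ← sum_eq_card_filter_pos_of_le_one hM, two_mul_card_eq_sum_edgeCoverCount hloop]

/-- A matching `ME ⊆ CE` of maximum size: two vertices missed by `ME` cannot lie on the same edge
of `CE`, so each edge of `CE \ ME` covers at most one of them. -/
theorem exists_isMatching_card_edgeCovered_le {CE : Finset (Sym2 V)}
    (hCE : ∀ e ∈ CE, ¬ e.IsDiag) :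
    ∃ ME ⊆ CE, IsMatching ME ∧ #(edgeCovered CE) ≤ #ME + #CE := by
  obtain ⟨ME, ⟨hsub, hM⟩, hmax⟩ := Set.exists_max_image {M | M ⊆ CE ∧ IsMatching M} card
    (Set.toFinite _) ⟨∅, empty_subset _, fun v => by simp [edgeCoverCount]⟩
  refine ⟨ME, hsub, hM, ?_⟩
  set Y := edgeCovered CE \ edgeCovered ME
  have hex : ∀ v ∈ Y, ∃ e ∈ CE \ ME, v ∈ e := by
    intro v hv
    simp only [Y, edgeCovered, mem_sdiff, mem_filter, mem_univ, true_and,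
      edgeCoverCount_pos_iff, not_exists, not_and] at hv
    obtain ⟨⟨e, he, hve⟩, hvME⟩ := hv
    exact ⟨e, mem_sdiff.2 ⟨he, fun h => hvME e h hve⟩, hve⟩
  have hY : ∀ y ∈ Y, edgeCoverCount ME y = 0 := fun y hy => by
    simpa [Y, edgeCovered] using (mem_sdiff.1 hy).2
  have hsing : ∀ e ∈ CE \ ME, ({v ∈ Y | v ∈ e} : Set V).Subsingleton := by
    rintro e he v ⟨hv, hve⟩ w ⟨hw, hwe⟩
    by_contra hne
    have hfree : ∀ z ∈ e, edgeCoverCount ME z = 0 := by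
      intro z hz
      rw [(Sym2.mem_and_mem_iff hne).1 ⟨hve, hwe⟩, Sym2.mem_iff] at hz
      rcases hz with rfl | rfl
      exacts [hY z hv, hY z hw]
    obtain ⟨heCE, heME⟩ := mem_sdiff.1 he
    have := hmax (insert e ME) ⟨insert_subset heCE hsub, isMatching_insert hM hfree⟩
    rw [card_insert_of_notMem heME] at this
    omega
  calc #(edgeCovered CE) ≤ #Y + #(edgeCovered ME) := card_le_card_sdiff_add_card
    _ ≤ #(CE \ ME) + 2 * #ME := add_le_add (card_le_card_of_forall_subsingleton _ hex hsing)
        (card_edgeCovered_of_isMatching hM fun e he => hCE e (hsub he)).le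
    _ = #ME + #CE := by rw [card_sdiff_of_subset hsub]; have := card_le_card hsub; omega

theorem exists_matchingForest_le_mixSize_add {E : Finset (Sym2 V)} {A : Finset (V × V)}
    (hE : ∀ e ∈ E, ¬ e.IsDiag) {CE : Finset (Sym2 V)} {CA : Finset (V × V)} (hCE : CE ⊆ E)
    (hCA : CA ⊆ A) (hC : IsMixedEdgeCover CE CA) :
    ∃ FE FA, FE ⊆ E ∧ FA ⊆ A ∧ IsMatchingForest FE FA ∧
      (Fintype.card V : ℚ) ≤ mixSize FE FA + mixSize CE CA := by
  have hreach : ∀ v, ∃ x ∈ edgeCovered CE, arcReach CA x v := fun v =>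
    let ⟨u, hu, h⟩ := hC v
    ⟨u, mem_filter.2 ⟨mem_univ _, edgeCoverCount_pos_iff.2 hu⟩, h⟩
  obtain ⟨B, hBCA, hBcount, f, hf⟩ := exists_branching hreach
  obtain ⟨ME, hMECE, hME, hcard⟩ :=
    exists_isMatching_card_edgeCovered_le fun e he => hE e (hCE he)
  have hcov : ∀ v, edgeCoverCount ME v + arcCoverCount B v ≤ 1 := by
    intro v
    rw [hBcount]
    split_ifs with hv
    · exact hME v
    · have : edgeCoverCount CE v = 0 := by simpa [edgeCovered] using hv
      have := edgeCoverCount_mono hMECE v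
      omega
  have hB : #B + #(edgeCovered CE) = Fintype.card V := by
    simp [card_eq_sum_arcCoverCount, hBcount, sum_ite, filter_not, card_sdiff,
      Nat.sub_add_cancel (card_le_univ _)]
  refine ⟨ME, B, hMECE.trans hCE, hBCA.trans hCA,
    isMatchingForest_of_potential (fun e he => hE e (hCE (hMECE he))) hcov f hf, ?_⟩
  have hBle : (#B : ℚ) ≤ #CA := by exact_mod_cast card_le_card hBCA
  have hcard' : (#(edgeCovered CE) : ℚ) ≤ #ME + #CE := by exact_mod_cast hcard
  have hB' : (#B : ℚ) + #(edgeCovered CE) = Fintype.card V := by exact_mod_cast hB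
  simp only [mixSize]
  linarith

omit [Fintype V] [DecidableEq V] in
theorem arcReach_mono {B B' : Finset (V × V)} (h : B ⊆ B') {x y : V} (hxy : arcReach B x y) :
    arcReach B' x y :=
  Relation.ReflTransGen.mono (fun _ _ hab => h hab) x y hxy

omit [Fintype V] in
theorem eq_of_arcReach_of_arcCoverCount_eq_zero {B : Finset (V × V)} {w v : V}
    (hv : arcCoverCount B v = 0) (h : arcReach B w v) : v = w := by
  rcases h.cases_tail with h | ⟨c, -, hcv⟩
  · exact h
  · have : 0 < arcCoverCount B v := arcCoverCount_pos_iff.2 ⟨(c, v), hcv, rfl⟩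
    omega

omit [Fintype V] in
theorem arcReach_fst_of_arcReach_snd {B : Finset (V × V)} {a : V × V} (ha : a ∈ B)
    (hB : arcCoverCount B a.2 ≤ 1) {w : V} (h : arcReach B w a.2) (hne : a.2 ≠ w) :
    arcReach B w a.1 := by
  rcases h.cases_tail with h | ⟨c, hc, hca⟩
  · exact absurd h hne
  · have : (c, a.2) = a := card_le_one.1 hB _ (mem_filter.2 ⟨hca, rfl⟩) _ (mem_filter.2 ⟨ha, rfl⟩)
    rwa [← this]

omit [Fintype V] in
/-- When `u` is a root of the branching `F`, the tree of `u` is hung below `w`, re-rooted at `w`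
if it contains `w`. -/
def cutLink (F : Finset (V × V)) (w u : V) : Finset (V × V) :=
  insert (w, u) (F.filter fun a => a.2 ≠ w)

omit [Fintype V] in
theorem arcCoverCount_insert {F : Finset (V × V)} {p : V × V} (hp : p ∉ F) (v : V) :
    arcCoverCount (insert p F) v = arcCoverCount F v + if p.2 = v then 1 else 0 := by
  unfold arcCoverCount
  rw [filter_insert]
  split_ifs
  · exact card_insert_of_notMem fun h => hp (mem_filter.1 h).1
  · rfl

omit [Fintype V] in
theorem arcCoverCount_filter_snd_ne (F : Finset (V × V)) (w v : V) :
    arcCoverCount (F.filter fun a => a.2 ≠ w) v = if v = w then 0 else arcCoverCount F v := by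
  unfold arcCoverCount
  rw [filter_filter]
  split_ifs with h
  · subst h
    simp
  · congr 1
    exact filter_congr fun a _ => ⟨And.right, fun ha => ⟨ha ▸ h, ha⟩⟩

omit [Fintype V] in
theorem not_mem_filter_of_arcCoverCount_eq_zero {F : Finset (V × V)} {w u : V}
    (hu : arcCoverCount F u = 0) : (w, u) ∉ F.filter fun a => a.2 ≠ w := fun h => by
  have : 0 < arcCoverCount F u := arcCoverCount_pos_iff.2 ⟨_, (mem_filter.1 h).1, rfl⟩
  omega

omit [Fintype V] in
theorem arcCoverCount_cutLink {F : Finset (V × V)} {w u : V} (hu : arcCoverCount F u = 0)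
    (hwu : w ≠ u) (v : V) : arcCoverCount (cutLink F w u) v =
      if v = u then 1 else if v = w then 0 else arcCoverCount F v := by
  rw [cutLink, arcCoverCount_insert (not_mem_filter_of_arcCoverCount_eq_zero hu),
    arcCoverCount_filter_snd_ne]
  by_cases hvu : v = u
  · subst hvu
    simp [hwu.symm, hu]
  · simp [hvu, Ne.symm hvu]

omit [Fintype V] in
theorem card_cutLink {F : Finset (V × V)} {w u : V} (hu : arcCoverCount F u = 0) :
    #(cutLink F w u) + arcCoverCount F w = #F + 1 := by
  have := card_filter_add_card_filter_not (s := F) fun a : V × V => a.2 ≠ w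
  simp only [ne_eq, not_not] at this
  rw [cutLink, card_insert_of_notMem (not_mem_filter_of_arcCoverCount_eq_zero hu), arcCoverCount]
  simp only [ne_eq]
  omega

theorem isMatchingForest_cutLink {FE : Finset (Sym2 V)} {F : Finset (V × V)}
    (hFE : ∀ e ∈ FE, ¬ e.IsDiag) (hF : IsMatchingForest FE F) {w u : V}
    (hu : edgeCoverCount FE u + arcCoverCount F u = 0) (hwu : w ≠ u) :
    IsMatchingForest FE (cutLink F w u) := by
  classical
  obtain ⟨f, hf⟩ := exists_potential_of_isMatchingForest hF
  have hcount := arcCoverCount_cutLink (by omega : arcCoverCount F u = 0) hwu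
  -- lifting everything outside the subtree of `w` above `f w` makes the new arc `(w, u)` climb
  refine isMatchingForest_of_potential hFE (fun v => ?_)
    (fun v => f v + if arcReach F w v then 0 else f w + 1) fun a ha => ?_
  · rw [hcount]
    have := hF.2 v
    split_ifs <;> subst_vars <;> omega
  rcases mem_insert.1 ha with rfl | ha
  · have : ¬ arcReach F w u := fun h =>
      hwu (eq_of_arcReach_of_arcCoverCount_eq_zero (by omega) h).symm
    simp [this, show arcReach F w w from .refl]
    omega
  · obtain ⟨haF, haw⟩ := mem_filter.1 ha
    have := hf a haF
    by_cases h1 : arcReach F w a.1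
    · have h2 : arcReach F w a.2 := h1.tail haF
      simp [h1, h2]
      omega
    · have h2 : ¬ arcReach F w a.2 := fun h2 =>
        h1 (arcReach_fst_of_arcReach_snd haF (by have := hF.2 a.2; omega) h2 haw)
      simp [h1, h2]
      omega

/-- Along a path `x → ⋯ → v` in `A`, an uncovered vertex can be moved back to `x` by repeated
`cutLink` steps without changing the number of arcs; a step that would add an arc is excluded by
maximality. -/
theorem exists_uncovered_subset_of_arcReach {A : Finset (V × V)} {ME : Finset (Sym2 V)}
    (hME : ∀ e ∈ ME, ¬ e.IsDiag) {N : ℕ} (hmax : ∀ FA ⊆ A, IsMatchingForest ME FA → #FA ≤ N)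
    {x v : V} (hxv : arcReach A x v) :
    ∀ MA ⊆ A, IsMatchingForest ME MA → #MA = N → v ∉ covered ME MA →
      ∃ MA' ⊆ A, IsMatchingForest ME MA' ∧ #MA' = N ∧
        (covered ME MA')ᶜ ⊆ insert x ((covered ME MA)ᶜ.erase v) := by
  induction hxv with
  | refl =>
    intro MA hMA hF hN _
    refine ⟨MA, hMA, hF, hN, fun z hz => ?_⟩
    rcases eq_or_ne z x with rfl | hzx
    · exact mem_insert_self _ _
    · exact mem_insert_of_mem (mem_erase.2 ⟨hzx, hz⟩)
  | @tail w v _ hwv ih =>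
    intro MA hMA hF hN hv
    rcases eq_or_ne w v with rfl | hne
    · exact ih MA hMA hF hN hv
    have hv0 : edgeCoverCount ME v + arcCoverCount MA v = 0 := by simpa [covered] using hv
    have hcount := arcCoverCount_cutLink (by omega : arcCoverCount MA v = 0) hne
    have hF₁ := isMatchingForest_cutLink hME hF hv0 hne
    have hsub : cutLink MA w v ⊆ A := insert_subset hwv ((filter_subset _ _).trans hMA)
    have hcard := card_cutLink (w := w) (by omega : arcCoverCount MA v = 0)
    have hw := hF.2 w
    have hw1 : arcCoverCount MA w = 1 := by
      have := hmax _ hsub hF₁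
      omega
    obtain ⟨MA', hMA', hF', hN', hU'⟩ :=
      ih (cutLink MA w v) hsub hF₁ (by omega) (by simp [covered, hcount, hne]; omega)
    refine ⟨MA', hMA', hF', hN', hU'.trans (insert_subset_insert _ fun z hz => ?_)⟩
    simp only [mem_erase, mem_compl, covered, mem_filter, mem_univ, true_and, hcount] at hz ⊢
    obtain ⟨hzw, hz⟩ := hz
    by_cases hzv : z = v
    · simp [hzv] at hz
    · simp only [hzv, hzw, if_false] at hz
      exact ⟨hzv, hz⟩

/-- Among the matching forests of maximum mix-size take one with fewest uncovered vertices that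
lie on no edge of `E`; moving such a vertex back to the start of a path from an edge of a mixed
edge cover would decrease that number. -/
theorem exists_max_matchingForest_uncovered_on_edge {E : Finset (Sym2 V)} {A : Finset (V × V)}
    (hE : ∀ e ∈ E, ¬ e.IsDiag) (hcov : ∃ FE FA, FE ⊆ E ∧ FA ⊆ A ∧ IsMixedEdgeCover FE FA)
    {ν : ℚ} (hν : IsGreatest {q : ℚ | ∃ FE FA, FE ⊆ E ∧ FA ⊆ A ∧ IsMatchingForest FE FA ∧
      q = mixSize FE FA} ν) :
    ∃ ME MA, ME ⊆ E ∧ MA ⊆ A ∧ IsMatchingForest ME MA ∧ mixSize ME MA = ν ∧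
      ∀ v ∉ covered ME MA, ∃ e ∈ E, v ∈ e := by
  classical
  let bad (p : Finset (Sym2 V) × Finset (V × V)) : Finset V :=
    (covered p.1 p.2)ᶜ.filter fun v => ∀ e ∈ E, v ∉ e
  obtain ⟨⟨ME, MA⟩, ⟨hME, hMA, hF, hsize⟩, hmin⟩ := Set.exists_min_image
    {p | p.1 ⊆ E ∧ p.2 ⊆ A ∧ IsMatchingForest p.1 p.2 ∧ mixSize p.1 p.2 = ν} (fun p => #(bad p))
    (Set.toFinite _) (let ⟨FE, FA, h⟩ := hν.1; ⟨(FE, FA), h.1, h.2.1, h.2.2.1, h.2.2.2.symm⟩)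
  refine ⟨ME, MA, hME, hMA, hF, hsize, fun u hu => ?_⟩
  by_contra! hbad
  obtain ⟨GE, GA, hGE, hGA, hG⟩ := hcov
  obtain ⟨x, ⟨e, he, hxe⟩, hxu⟩ := hG u
  have hmax : ∀ FA ⊆ A, IsMatchingForest ME FA → #FA ≤ #MA := fun FA hFA hF' => by
    have := hν.2 ⟨ME, FA, hME, hFA, hF', rfl⟩
    rw [← hsize, mixSize, mixSize] at this
    exact_mod_cast (by linarith : (#FA : ℚ) ≤ #MA)
  obtain ⟨MA', hMA', hF', hcard, hsub⟩ := exists_uncovered_subset_of_arcReach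
    (fun e he => hE e (hME he)) hmax (arcReach_mono hGA hxu) MA hMA hF rfl hu
  have hbad' : bad (ME, MA') ⊆ (bad (ME, MA)).erase u := by
    intro z hz
    obtain ⟨hzU, hzE⟩ := mem_filter.1 hz
    rcases mem_insert.1 (hsub hzU) with rfl | hz'
    · exact absurd hxe (hzE e (hGE he))
    · exact mem_erase.2 ⟨(mem_erase.1 hz').1, mem_filter.2 ⟨(mem_erase.1 hz').2, hzE⟩⟩
  have := hmin (ME, MA') ⟨hME, hMA', hF', by rw [← hsize, mixSize, mixSize, hcard]⟩
  have := (card_le_card hbad').trans_lt (card_erase_lt_of_mem (mem_filter.2 ⟨mem_compl.2 hu, hbad⟩))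
  omega

theorem exists_mixedEdgeCover_of_isMatchingForest {E ME : Finset (Sym2 V)} {MA : Finset (V × V)}
    (hE : ∀ e ∈ E, ¬ e.IsDiag) (hME : ME ⊆ E) (hF : IsMatchingForest ME MA)
    (hU : ∀ v ∉ covered ME MA, ∃ e ∈ E, v ∈ e) :
    ∃ CE ⊆ E, IsMixedEdgeCover CE MA ∧
      mixSize CE MA + mixSize ME MA ≤ Fintype.card V := by
  classical
  have hU' : ∀ v, ∃ e : Sym2 V, v ∉ covered ME MA → e ∈ E ∧ v ∈ e := fun v => by
    by_cases hv : v ∈ covered ME MA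
    · exact ⟨s(v, v), fun h => absurd hv h⟩
    · obtain ⟨e, he⟩ := hU v hv
      exact ⟨e, fun _ => he⟩
  choose φ hφ using hU'
  obtain ⟨f, hf⟩ := exists_potential_of_isMatchingForest hF
  refine ⟨ME ∪ (covered ME MA)ᶜ.image φ,
    union_subset hME (image_subset_iff.2 fun v hv => (hφ v (mem_compl.1 hv)).1), fun v => ?_, ?_⟩
  · obtain ⟨r, hr, hrv⟩ := exists_root_arcReach hf v
    refine ⟨r, ?_, hrv⟩
    by_cases hrc : r ∈ covered ME MA
    · obtain ⟨e, he, hre⟩ := edgeCoverCount_pos_iff.1 (by simpa [covered, hr] using hrc)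
      exact ⟨e, mem_union_left _ he, hre⟩
    · exact ⟨φ r, mem_union_right _ (mem_image_of_mem _ (mem_compl.2 hrc)), (hφ r hrc).2⟩
  · have hcard : #(ME ∪ (covered ME MA)ᶜ.image φ) + #MA + #ME ≤ Fintype.card V := by
      have := card_covered (fun e he => hE e (hME he)) hF.2
      have := card_compl (covered ME MA)
      have := card_le_univ (covered ME MA)
      have := card_union_le ME ((covered ME MA)ᶜ.image φ)
      have := card_image_le (s := (covered ME MA)ᶜ) (f := φ)
      omega
    simp only [mixSize]
    have : ((#(ME ∪ (covered ME MA)ᶜ.image φ) + #MA + #ME : ℕ) : ℚ) ≤ Fintype.card V := by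
      exact_mod_cast hcard
    push_cast at this
    linarith

omit [DecidableEq V] in
theorem exists_isGreatest_mixSize (E : Finset (Sym2 V)) (A : Finset (V × V))
    (P : Finset (Sym2 V) → Finset (V × V) → Prop) (h : ∃ FE FA, FE ⊆ E ∧ FA ⊆ A ∧ P FE FA) :
    ∃ ν, IsGreatest {q : ℚ | ∃ FE FA, FE ⊆ E ∧ FA ⊆ A ∧ P FE FA ∧ q = mixSize FE FA} ν := by
  obtain ⟨⟨FE, FA⟩, hP, hmax⟩ := Set.exists_max_image
    {p : Finset (Sym2 V) × Finset (V × V) | p.1 ⊆ E ∧ p.2 ⊆ A ∧ P p.1 p.2}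
    (fun p => mixSize p.1 p.2) (Set.toFinite _) (let ⟨FE, FA, h⟩ := h; ⟨(FE, FA), h⟩)
  exact ⟨_, ⟨FE, FA, hP.1, hP.2.1, hP.2.2, rfl⟩,
    by rintro _ ⟨FE', FA', h₁, h₂, h₃, rfl⟩; exact hmax (FE', FA') ⟨h₁, h₂, h₃⟩⟩

omit [DecidableEq V] in
theorem exists_isLeast_mixSize (E : Finset (Sym2 V)) (A : Finset (V × V))
    (P : Finset (Sym2 V) → Finset (V × V) → Prop) (h : ∃ FE FA, FE ⊆ E ∧ FA ⊆ A ∧ P FE FA) :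
    ∃ ρ, IsLeast {q : ℚ | ∃ FE FA, FE ⊆ E ∧ FA ⊆ A ∧ P FE FA ∧ q = mixSize FE FA} ρ := by
  obtain ⟨⟨FE, FA⟩, hP, hmin⟩ := Set.exists_min_image
    {p : Finset (Sym2 V) × Finset (V × V) | p.1 ⊆ E ∧ p.2 ⊆ A ∧ P p.1 p.2}
    (fun p => mixSize p.1 p.2) (Set.toFinite _) (let ⟨FE, FA, h⟩ := h; ⟨(FE, FA), h⟩)
  exact ⟨_, ⟨FE, FA, hP.1, hP.2.1, hP.2.2, rfl⟩,
    by rintro _ ⟨FE', FA', h₁, h₂, h₃, rfl⟩; exact hmin (FE', FA') ⟨h₁, h₂, h₃⟩⟩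

theorem gallai_for_mixed_graphs_general
    (E : Finset (Sym2 V)) (A : Finset (V × V))
    (hE : ∀ e ∈ E, ¬ e.IsDiag)
    (hcov : ∃ FE FA, FE ⊆ E ∧ FA ⊆ A ∧ IsMixedEdgeCover FE FA) :
    ∃ ν ρ : ℚ,
      IsGreatest {q : ℚ | ∃ FE FA, FE ⊆ E ∧ FA ⊆ A ∧ IsMatchingForest FE FA ∧
        q = mixSize FE FA} ν ∧
      IsLeast {q : ℚ | ∃ FE FA, FE ⊆ E ∧ FA ⊆ A ∧ IsMixedEdgeCover FE FA ∧
        q = mixSize FE FA} ρ ∧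
      ν + ρ = (Fintype.card V : ℚ) := by
  obtain ⟨ν, hν⟩ := exists_isGreatest_mixSize E A IsMatchingForest
    ⟨∅, ∅, empty_subset _, empty_subset _,
      isMatchingForest_of_potential (by simp) (by simp [edgeCoverCount, arcCoverCount]) 0 (by simp)⟩
  obtain ⟨ρ, hρ⟩ := exists_isLeast_mixSize E A IsMixedEdgeCover hcov
  refine ⟨ν, ρ, hν, hρ, le_antisymm ?_ ?_⟩
  · obtain ⟨ME, MA, hME, hMA, hF, hsize, hU⟩ :=
      exists_max_matchingForest_uncovered_on_edge hE hcov hν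
    obtain ⟨CE, hCE, hC, hle⟩ := exists_mixedEdgeCover_of_isMatchingForest hE hME hF hU
    have := hρ.2 ⟨CE, MA, hCE, hMA, hC, rfl⟩
    linarith
  · obtain ⟨CE, CA, hCE, hCA, hC, rfl⟩ := hρ.1
    obtain ⟨FE, FA, hFE, hFA, hF, hle⟩ := exists_matchingForest_le_mixSize_add hE hCE hCA hC
    have := hν.2 ⟨FE, FA, hFE, hFA, hF, rfl⟩
    linarith

theorem gallai_for_mixed_graphs
    (E : Finset (Sym2 V)) (A : Finset (V × V))
    (hE : ∀ e ∈ E, ¬ e.IsDiag) (hA : ∀ a ∈ A, a.1 ≠ a.2)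
    (hcov : ∃ FE FA, FE ⊆ E ∧ FA ⊆ A ∧ IsMixedEdgeCover FE FA) :
    ∃ ν ρ : ℚ,
      IsGreatest {q : ℚ | ∃ FE FA, FE ⊆ E ∧ FA ⊆ A ∧ IsMatchingForest FE FA ∧
        q = mixSize FE FA} ν ∧
      IsLeast {q : ℚ | ∃ FE FA, FE ⊆ E ∧ FA ⊆ A ∧ IsMixedEdgeCover FE FA ∧
        q = mixSize FE FA} ρ ∧
      ν + ρ = (Fintype.card V : ℚ) :=
  gallai_for_mixed_graphs_general E A hE hcov
end

section
/- Reduction of bibranchings to mixed edge covers: Let D = (V, A) be a digraph with partition V = V1 ∪ V2 and no arc from V2 to V1. Construct the mixed graph G from D by replacing every arc from V1 to V2 by an undirected edge and reversing every arc with both endpoints in V1. Then an arc set F ⊆ A is a (V1, V2)-bibranching in D if and only if the corresponding set of edges and arcs in G is a mixed edge cover of G. -/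
variable {V : Type*} [Fintype V] [DecidableEq V]

/-- A `(V1, V2)`-bibranching: every vertex of `V1` has a directed path in `F` to `V2`,
and every vertex of `V2` has a directed path in `F` from `V1`. -/
def IsBibranching (V1 V2 : Finset V) (F : Finset (V × V)) : Prop :=
  (∀ v ∈ V1, ∃ u ∈ V2, arcReach F v u) ∧ (∀ v ∈ V2, ∃ u ∈ V1, arcReach F u v)


section Helpers

variable (V1 V2 : Finset V) (F : Finset (V × V))

private def FAux : Finset (V × V) :=
  (F.filter (fun a => a.1 ∈ V2 ∧ a.2 ∈ V2)) ∪
    (F.filter (fun a => a.1 ∈ V1 ∧ a.2 ∈ V1)).image Prod.swap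

private lemma mem_FAux {a b : V} :
    (a, b) ∈ FAux V1 V2 F ↔
      ((a, b) ∈ F ∧ a ∈ V2 ∧ b ∈ V2) ∨ ((b, a) ∈ F ∧ b ∈ V1 ∧ a ∈ V1) := by
  simp only [FAux, Finset.mem_union, Finset.mem_filter, Finset.mem_image, Prod.ext_iff,
    Prod.swap]
  aesop

variable (hdisj : Disjoint V1 V2)

include hdisj in
private lemma reach_FAux {u v : V} (h : arcReach (FAux V1 V2 F) u v) :
    u = v ∨ (u ∈ V2 ∧ v ∈ V2 ∧ arcReach F u v) ∨ (u ∈ V1 ∧ v ∈ V1 ∧ arcReach F v u) := by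
  have hd : ∀ x : V, x ∈ V1 → x ∈ V2 → False := fun x h1 h2 =>
    Finset.disjoint_left.mp hdisj h1 h2
  induction h with
  | refl => exact Or.inl rfl
  | @tail b c _ hbc ih =>
      rcases (mem_FAux V1 V2 F).mp hbc with ⟨hbcF, hb2, hc2⟩ | ⟨hcbF, hc1, hb1⟩
      · rcases ih with rfl | ⟨hu2, hb2', hr⟩ | ⟨hu1, hb1', _⟩
        · exact Or.inr (Or.inl ⟨hb2, hc2, Relation.ReflTransGen.single hbcF⟩)
        · exact Or.inr (Or.inl ⟨hu2, hc2, hr.tail hbcF⟩)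
        · exact absurd hb2 (fun h => hd _ hb1' h)
      · rcases ih with rfl | ⟨hu2, hb2', _⟩ | ⟨hu1, hb1', hr⟩
        · exact Or.inr (Or.inr ⟨hb1, hc1, Relation.ReflTransGen.single hcbF⟩)
        · exact absurd hb2' (fun h => hd _ hb1 h)
        · exact Or.inr (Or.inr ⟨hu1, hc1, Relation.ReflTransGen.head hcbF hr⟩)

variable (hcov : V1 ∪ V2 = Finset.univ)
  (hA : ∀ a ∈ F, ¬ (a.1 ∈ V2 ∧ a.2 ∈ V1))

include hcov hA in
private lemma reach_V2 {u v : V} (h : arcReach F u v) (hu : u ∈ V2) :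
    arcReach (FAux V1 V2 F) u v ∧ v ∈ V2 := by
  induction h using Relation.ReflTransGen.head_induction_on with
  | refl => exact ⟨Relation.ReflTransGen.refl, hu⟩
  | @head a b hab _ ih =>
      have hb2 : b ∈ V2 := by
        have : b ∈ V1 ∪ V2 := hcov ▸ Finset.mem_univ b
        rcases Finset.mem_union.mp this with h1 | h2
        · exact absurd ⟨hu, h1⟩ (hA _ hab)
        · exact h2
      obtain ⟨hr, hv2⟩ := ih hb2
      exact ⟨Relation.ReflTransGen.head ((mem_FAux V1 V2 F).mpr
        (Or.inl ⟨hab, hu, hb2⟩)) hr, hv2⟩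

include hdisj hcov hA in
private lemma cross_decomp {u v : V} (h : arcReach F u v) (hu : u ∈ V1) (hv : v ∈ V2) :
    ∃ x y : V, (x, y) ∈ F ∧ x ∈ V1 ∧ y ∈ V2 ∧
      arcReach (FAux V1 V2 F) x u ∧ arcReach (FAux V1 V2 F) y v := by
  induction h using Relation.ReflTransGen.head_induction_on with
  | refl => exact absurd hv (fun h => Finset.disjoint_left.mp hdisj hu h)
  | @head a b hab hbv ih =>
      by_cases hb1 : b ∈ V1
      · obtain ⟨x, y, hxy, hx1, hy2, hxu, hyv⟩ := ih hb1
        refine ⟨x, y, hxy, hx1, hy2, hxu.tail ?_, hyv⟩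
        exact (mem_FAux V1 V2 F).mpr (Or.inr ⟨hab, hu, hb1⟩)
      · have hb2 : b ∈ V2 := by
          have : b ∈ V1 ∪ V2 := hcov ▸ Finset.mem_univ b
          rcases Finset.mem_union.mp this with h1 | h2
          · exact absurd h1 hb1
          · exact h2
        exact ⟨a, b, hab, hu, hb2, Relation.ReflTransGen.refl,
          (reach_V2 V1 V2 F hcov hA hbv hb2).1⟩

end Helpers

theorem bibranching_iff_mixed_edge_cover
    (V1 V2 : Finset V) (hdisj : Disjoint V1 V2) (hcov : V1 ∪ V2 = Finset.univ)
    (A : Finset (V × V)) (hA : ∀ a ∈ A, ¬ (a.1 ∈ V2 ∧ a.2 ∈ V1))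
    (F : Finset (V × V)) (hF : F ⊆ A) :
    IsBibranching V1 V2 F ↔
      IsMixedEdgeCover
        ((F.filter (fun a => a.1 ∈ V1 ∧ a.2 ∈ V2)).image (fun a => s(a.1, a.2)))
        ((F.filter (fun a => a.1 ∈ V2 ∧ a.2 ∈ V2)) ∪
          (F.filter (fun a => a.1 ∈ V1 ∧ a.2 ∈ V1)).image Prod.swap) := by
  classical
  have hd : ∀ x : V, x ∈ V1 → x ∈ V2 → False := fun x h1 h2 =>
    Finset.disjoint_left.mp hdisj h1 h2
  have hA' : ∀ a ∈ F, ¬ (a.1 ∈ V2 ∧ a.2 ∈ V1) := fun a haF => hA a (hF haF)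
  constructor
  · rintro ⟨h1, h2⟩ v
    have hvmem : v ∈ V1 ∪ V2 := hcov ▸ Finset.mem_univ v
    rcases Finset.mem_union.mp hvmem with hv1 | hv2
    · obtain ⟨u, hu2, hr⟩ := h1 v hv1
      obtain ⟨x, y, hxy, hx1, hy2, hxv, _⟩ :=
        cross_decomp V1 V2 F hdisj hcov hA' hr hv1 hu2
      refine ⟨x, ⟨s(x, y), ?_, ?_⟩, hxv⟩
      · exact Finset.mem_image_of_mem _ (Finset.mem_filter.mpr ⟨hxy, hx1, hy2⟩)
      · exact Sym2.mem_mk_left x y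
    · obtain ⟨u, hu1, hr⟩ := h2 v hv2
      obtain ⟨x, y, hxy, hx1, hy2, _, hyv⟩ :=
        cross_decomp V1 V2 F hdisj hcov hA' hr hu1 hv2
      refine ⟨y, ⟨s(x, y), ?_, ?_⟩, hyv⟩
      · exact Finset.mem_image_of_mem _ (Finset.mem_filter.mpr ⟨hxy, hx1, hy2⟩)
      · exact Sym2.mem_mk_right x y
  · intro h
    constructor
    · intro v hv1
      obtain ⟨u, ⟨e, he, hue⟩, hr⟩ := h v
      obtain ⟨⟨a1, a2⟩, ha, rfl⟩ := Finset.mem_image.mp he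
      obtain ⟨haF, ha1, ha2⟩ := Finset.mem_filter.mp ha
      rcases reach_FAux V1 V2 F hdisj hr with rfl | ⟨hu2, hv2, _⟩ | ⟨hu1, _, hr'⟩
      · rcases Sym2.mem_iff.mp hue with rfl | rfl
        · exact ⟨a2, ha2, Relation.ReflTransGen.single haF⟩
        · exact absurd hv1 (fun h => hd _ h ha2)
      · exact absurd hv2 (fun h => hd _ hv1 h)
      · have hua1 : u = a1 := by
          rcases Sym2.mem_iff.mp hue with rfl | rfl
          · rfl
          · exact absurd hu1 (fun h => hd _ h ha2)
        subst hua1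
        exact ⟨a2, ha2, hr'.tail haF⟩
    · intro v hv2
      obtain ⟨u, ⟨e, he, hue⟩, hr⟩ := h v
      obtain ⟨⟨a1, a2⟩, ha, rfl⟩ := Finset.mem_image.mp he
      obtain ⟨haF, ha1, ha2⟩ := Finset.mem_filter.mp ha
      rcases reach_FAux V1 V2 F hdisj hr with rfl | ⟨hu2, _, hr'⟩ | ⟨hu1, hv1, _⟩
      · rcases Sym2.mem_iff.mp hue with rfl | rfl
        · exact absurd hv2 (fun h => hd _ ha1 h)
        · exact ⟨a1, ha1, Relation.ReflTransGen.single haF⟩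
      · have hua2 : u = a2 := by
          rcases Sym2.mem_iff.mp hue with rfl | rfl
          · exact absurd hu2 (fun h => hd _ ha1 h)
          · rfl
        subst hua2
        exact ⟨a1, ha1, Relation.ReflTransGen.head haF hr'⟩
      · exact absurd hv1 (fun h => hd _ h hv2)
end
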